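/- Let k ≥ 2 and p ≥ 1. Define λ_{p,k} = sup over measurable g : [0,1]^{k−1} → {0,…,p−1} of the Lebesgue measure of {x ∈ [0,1]^k : g(x₁,…,x_{k−1}) > g(x₂,…,x_k)}. Then λ_{p,k} ≥ (1 − ⌈(k−1)/p⌉/(k−1))·(1 − 1/k). -/

import Mathlib

open MeasureTheory unitInterval ENNReal

namespace Stmt5Aux

noncomputable def maxIdx {n : ℕ} (y : Fin n → I) : ℕ :=
  (List.argmax y (List.finRange n)).elim 0 Fin.val

lemma maxIdx_eq {n : ℕ} (y : Fin n → I) (j : Fin n) (h : ∀ a, a ≠ j → y a < y j) :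
    maxIdx y = j.1 := by
  rcases harg : List.argmax y (List.finRange n) with _ | m
  · exact absurd (List.argmax_eq_none.mp harg)
      (List.ne_nil_of_mem (List.mem_finRange j))
  · have hle : y j ≤ y m := List.le_of_mem_argmax (List.mem_finRange j) harg
    have hmj : m = j := by
      by_contra hmj
      exact absurd hle (not_le.mpr (h m hmj))
    subst hmj
    simp [maxIdx, harg]

lemma mod_pred {p j : ℕ} (hj : 1 ≤ j) (h : ¬ p ∣ j) : (j - 1) % p < j % p := by
  rcases Nat.lt_or_ge p 2 with hp | hp
  · interval_cases p
    · simpa using by omega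
    · exact absurd (one_dvd j) h
  · have hr : j % p ≠ 0 := fun h' => h (Nat.dvd_of_mod_eq_zero h')
    have hm : (j - 1) % p < p := Nat.mod_lt _ (by omega)
    have h2 : j % p = ((j - 1) % p + 1) % p := by
      conv_lhs => rw [show j = (j - 1) + 1 by omega]
      rw [Nat.add_mod, Nat.mod_eq_of_lt (show 1 < p by omega)]
    rcases Nat.lt_or_ge ((j - 1) % p + 1) p with hlt | hge
    · rw [Nat.mod_eq_of_lt hlt] at h2
      omega
    · have : (j - 1) % p + 1 = p := by omega
      rw [this, Nat.mod_self] at h2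
      exact absurd h2 hr

lemma measurable_le_set {n : ℕ} (a b : Fin n) :
    MeasurableSet {y : Fin n → I | y a ≤ y b} := by
  have : {y : Fin n → I | y a ≤ y b} = {y : Fin n → I | ((y a : ℝ)) ≤ ((y b : ℝ))} := by
    ext y; simp
  rw [this]
  exact measurableSet_le (measurable_subtype_coe.comp (measurable_pi_apply a))
    (measurable_subtype_coe.comp (measurable_pi_apply b))

lemma measurable_g {n p : ℕ} (hn : 0 < n) (hp : 0 < p) :
    Measurable (fun y : Fin n → I => (⟨maxIdx y % p, Nat.mod_lt _ hp⟩ : Fin p)) := by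
  apply measurable_to_countable'
  intro m
  have hS : ∀ j : Fin n,
      MeasurableSet {y : Fin n → I | List.argmax y (List.finRange n) = some j} := by
    intro j
    have hset : {y : Fin n → I | List.argmax y (List.finRange n) = some j}
        = (⋂ a : Fin n, {y : Fin n → I | y a ≤ y j}) ∩
          (⋂ a : Fin n, {y : Fin n → I | y j ≤ y a → j.1 ≤ a.1}) := by
      ext y
      simp only [Set.mem_setOf_eq, List.argmax_eq_some_iff, List.mem_finRange,
        List.idxOf_finRange, Set.mem_inter_iff, Set.mem_iInter, true_and, true_implies]
    rw [hset]
    refine (MeasurableSet.iInter fun a => measurable_le_set a j).inter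
      (MeasurableSet.iInter fun a => ?_)
    by_cases hja : j.1 ≤ a.1
    · simp only [hja]
      simp
    · have : {y : Fin n → I | y j ≤ y a → j.1 ≤ a.1} = {y : Fin n → I | y j ≤ y a}ᶜ := by
        ext y; simp [hja]
      rw [this]
      exact (measurable_le_set j a).compl
  have hpre : (fun y : Fin n → I => (⟨maxIdx y % p, Nat.mod_lt _ hp⟩ : Fin p)) ⁻¹' {m}
      = ⋃ j : Fin n, if j.1 % p = m.1 then
          {y : Fin n → I | List.argmax y (List.finRange n) = some j} else ∅ := by
    ext y
    simp only [Set.mem_preimage, Set.mem_singleton_iff, Set.mem_iUnion]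
    constructor
    · intro h
      rcases harg : List.argmax y (List.finRange n) with _ | j₀
      · exact absurd (List.argmax_eq_none.mp harg)
          (by simp only [ne_eq, List.finRange_eq_nil_iff]; omega)
      · refine ⟨j₀, ?_⟩
        have hmi : maxIdx y = j₀.1 := by simp [maxIdx, harg]
        have : maxIdx y % p = m.1 := by
          have := congrArg Fin.val h
          simpa using this
        rw [if_pos (by rw [← hmi]; exact this)]
        exact harg
    · rintro ⟨j, hj⟩
      by_cases hc : j.1 % p = m.1
      · rw [if_pos hc] at hj
        have hj' : List.argmax y (List.finRange n) = some j := hj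
        have hmi : maxIdx y = j.1 := by simp [maxIdx, hj']
        exact Fin.ext (by simpa [hmi] using hc)
      · rw [if_neg hc] at hj
        exact absurd hj (Set.notMem_empty y)
  rw [hpre]
  refine MeasurableSet.iUnion fun j => ?_
  by_cases hc : j.1 % p = m.1
  · rw [if_pos hc]; exact hS j
  · rw [if_neg hc]; exact MeasurableSet.empty



lemma perm_measurePreserving {k : ℕ} (e : Equiv.Perm (Fin k)) :
    MeasurePreserving (fun x : Fin k → I => x ∘ e) volume volume := by
  have hmeas : Measurable (fun x : Fin k → I => x ∘ e) :=
    measurable_pi_lambda _ (fun i => measurable_pi_apply (e i))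
  refine ⟨hmeas, ?_⟩
  rw [MeasureTheory.volume_pi]
  refine (Measure.pi_eq fun s hs => ?_).symm
  rw [Measure.map_apply hmeas (MeasurableSet.univ_pi hs)]
  have hpre : (fun x : Fin k → I => x ∘ e) ⁻¹' (Set.univ.pi s)
      = Set.univ.pi (fun i => s (e.symm i)) := by
    ext x
    simp only [Set.mem_preimage, Set.mem_univ_pi, Function.comp_apply]
    constructor
    · intro h i
      simpa using h (e.symm i)
    · intro h i
      simpa using h (e i)
  rw [hpre, Measure.pi_pi]
  exact Equiv.prod_comp e.symm fun i => volume (s i)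

lemma volume_eq_diag_zero {k : ℕ} (i j : Fin k) (hij : i ≠ j) :
    volume {x : Fin k → I | x i = x j} = 0 := by
  set D := {x : Fin k → I | x i = x j} with hD
  have key : ∀ m : ℕ, 0 < m → volume D ≤ (m : ℝ≥0∞)⁻¹ := by
    intro m hm
    have hm' : (0 : ℝ) < m := by exact_mod_cast hm
    set J : ℕ → Set I := fun r => {t : I | (r : ℝ) / m ≤ (t : ℝ) ∧ (t : ℝ) ≤ ((r : ℝ) + 1) / m}
      with hJdef
    have hJm : ∀ r, MeasurableSet (J r) := by
      intro r
      have : J r = (fun t : I => (t : ℝ)) ⁻¹' (Set.Icc ((r : ℝ) / m) (((r : ℝ) + 1) / m)) := by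
        ext t; simp [hJdef, Set.mem_Icc]
      rw [this]
      exact measurable_subtype_coe measurableSet_Icc
    have hJvol : ∀ r : ℕ, volume (J r) ≤ (m : ℝ≥0∞)⁻¹ := by
      intro r
      rw [unitInterval.volume_def, Measure.comap_apply _ Subtype.val_injective
        (fun s hs => (MeasurableEmbedding.subtype_coe measurableSet_Icc).measurableSet_image' hs)
        _ (hJm r)]
      have himg : (Subtype.val '' J r : Set ℝ) ⊆ Set.Icc ((r : ℝ) / m) (((r : ℝ) + 1) / m) := by
        rintro t ⟨u, hu, rfl⟩
        exact hu
      refine (measure_mono himg).trans ?_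
      rw [Real.volume_Icc]
      have heq : ((r : ℝ) + 1) / m - (r : ℝ) / m = (m : ℝ)⁻¹ := by
        field_simp
        ring
      rw [heq, ← ENNReal.ofReal_natCast m, ← ENNReal.ofReal_inv_of_pos hm']
    set B : ℕ → Set (Fin k → I) := fun r =>
      Set.univ.pi (fun l => if l = i ∨ l = j then J r else Set.univ) with hBdef
    have hBvol : ∀ r, volume (B r) = volume (J r) * volume (J r) := by
      intro r
      rw [hBdef]
      rw [volume_pi_pi]
      have hfac : (fun l : Fin k => volume (if l = i ∨ l = j then J r else Set.univ))
          = fun l => if l ∈ ({i, j} : Finset (Fin k)) then volume (J r) else 1 := by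
        funext l
        by_cases h : l = i ∨ l = j <;> simp [h, Finset.mem_insert, Finset.mem_singleton]
      rw [hfac, Finset.prod_ite_mem, Finset.univ_inter, Finset.prod_const,
        Finset.card_insert_of_notMem (by simp [hij]), Finset.card_singleton]
      ring
    have hcov : D ⊆ ⋃ r ∈ Finset.range m, B r := by
      intro x hx
      have hxij : x i = x j := hx
      set t : I := x i with ht
      have ht0 : (0 : ℝ) ≤ t := t.2.1
      have ht1 : (t : ℝ) ≤ 1 := t.2.2
      set r : ℕ := min (Nat.floor ((t : ℝ) * m)) (m - 1) with hr
      have hrm : r < m := by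
        have : r ≤ m - 1 := min_le_right _ _
        omega
      have hmem : (r : ℝ) / m ≤ (t : ℝ) ∧ (t : ℝ) ≤ ((r : ℝ) + 1) / m := by
        rcases Nat.lt_or_ge (Nat.floor ((t : ℝ) * m)) m with hfl | hfl
        · have hrr : r = Nat.floor ((t : ℝ) * m) := by omega
          constructor
          · rw [div_le_iff₀ hm']
            calc (r : ℝ) = (Nat.floor ((t : ℝ) * m) : ℝ) := by rw [hrr]
            _ ≤ (t : ℝ) * m := Nat.floor_le (by positivity)
          · rw [le_div_iff₀ hm']
            have h1 : (t : ℝ) * m < Nat.floor ((t : ℝ) * m) + 1 := Nat.lt_floor_add_one _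
            have h2 : ((Nat.floor ((t : ℝ) * m) : ℝ)) = (r : ℝ) := by rw [hrr]
            linarith
        · have hrr : r = m - 1 := by omega
          have h1 : (t : ℝ) = 1 := by
            have : (m : ℝ) ≤ (t : ℝ) * m := by
              have := (Nat.le_floor_iff (by positivity)).mp hfl
              exact_mod_cast this
            nlinarith
          have hc : ((r : ℝ)) = (m : ℝ) - 1 := by
            rw [hrr]
            push_cast [Nat.cast_sub (by omega : 1 ≤ m)]
            ring
          constructor
          · rw [hc, h1, div_le_one hm']
            linarith
          · rw [hc, h1, le_div_iff₀ hm']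
            ring_nf
            linarith
      refine Set.mem_biUnion (Finset.mem_range.mpr hrm) ?_
      rw [hBdef]
      intro l _
      by_cases h : l = i ∨ l = j
      · simp only [h, if_true]
        have hxl : x l = t := by
          rcases h with h | h
          · rw [h]
          · rw [h, ← hxij]
        rw [hJdef]
        simp only [Set.mem_setOf_eq, hxl]
        exact hmem
      · simp [h]
    have hsum : volume D ≤ ∑ r ∈ Finset.range m, volume (B r) :=
      (measure_mono hcov).trans (measure_biUnion_finset_le _ _)
    have hbound : ∑ r ∈ Finset.range m, volume (B r) ≤ m * ((m : ℝ≥0∞)⁻¹ * (m : ℝ≥0∞)⁻¹) := by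
      calc ∑ r ∈ Finset.range m, volume (B r)
          ≤ ∑ _r ∈ Finset.range m, ((m : ℝ≥0∞)⁻¹ * (m : ℝ≥0∞)⁻¹) := by
            refine Finset.sum_le_sum fun r _ => ?_
            rw [hBvol r]
            exact mul_le_mul' (hJvol r) (hJvol r)
        _ = m * ((m : ℝ≥0∞)⁻¹ * (m : ℝ≥0∞)⁻¹) := by
            rw [Finset.sum_const, Finset.card_range, nsmul_eq_mul]
    have hfin : (m : ℝ≥0∞) * ((m : ℝ≥0∞)⁻¹ * (m : ℝ≥0∞)⁻¹) = (m : ℝ≥0∞)⁻¹ := by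
      rw [← mul_assoc, ENNReal.mul_inv_cancel (by exact_mod_cast hm.ne')
        (ENNReal.natCast_ne_top m), one_mul]
    exact hsum.trans (hbound.trans_eq hfin)
  by_contra hne
  obtain ⟨m, hmlt⟩ := ENNReal.exists_inv_nat_lt hne
  have hm : 0 < m := by
    by_contra h0
    have : m = 0 := by omega
    rw [this] at hmlt
    simp at hmlt
  exact absurd (key m hm) (not_le.mpr hmlt)



def Amax {k : ℕ} (j : Fin k) : Set (Fin k → I) := {x | ∀ i, i ≠ j → x i < x j}

lemma measurableSet_Amax {k : ℕ} (j : Fin k) : MeasurableSet (Amax j) := by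
  have : Amax j = ⋂ i : Fin k, {x : Fin k → I | i ≠ j → ((x i : ℝ) < (x j : ℝ))} := by
    ext x
    simp [Amax]
  rw [this]
  refine MeasurableSet.iInter fun i => ?_
  by_cases hij : i = j
  · simp [hij]
  · simp only [hij, ne_eq, not_false_iff, true_implies]
    exact measurableSet_lt (measurable_subtype_coe.comp (measurable_pi_apply i))
      (measurable_subtype_coe.comp (measurable_pi_apply j))

lemma volume_Amax {k : ℕ} (j : Fin k) : volume (Amax j) = (k : ℝ≥0∞)⁻¹ := by
  have hk0 : 0 < k := j.pos
  have : Nonempty (Fin k) := ⟨j⟩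
  have hAe : ∀ j' : Fin k, volume (Amax j') = volume (Amax j) := by
    intro j'
    have hswap := perm_measurePreserving (Equiv.swap j' j)
    have hpre : (fun x : Fin k → I => x ∘ (Equiv.swap j' j)) ⁻¹' (Amax j') = Amax j := by
      ext x
      simp only [Set.mem_preimage, Amax, Set.mem_setOf_eq, Function.comp_apply,
        Equiv.swap_apply_left]
      constructor
      · intro h i' hi'
        have hne : (Equiv.swap j' j) i' ≠ j' := by
          intro hcon
          apply hi'
          have := congrArg (Equiv.swap j' j) hcon
          rwa [Equiv.swap_apply_self, Equiv.swap_apply_left] at this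
        have := h _ hne
        rwa [Equiv.swap_apply_self] at this
      · intro h i hi
        refine h _ ?_
        intro hcon
        exact hi ((Equiv.swap j' j).injective (hcon.trans (Equiv.swap_apply_left j' j).symm))
        
    have := hswap.measure_preimage (measurableSet_Amax j').nullMeasurableSet
    rw [hpre] at this
    exact this.symm
  have hdisj : Pairwise (Function.onFun Disjoint (Amax (k := k))) := by
    intro u v huv
    rw [Function.onFun, Set.disjoint_left]
    intro x hxu hxv
    exact absurd (hxv u huv) (lt_asymm (hxu v huv.symm))
  have hN : volume (⋃ (u : Fin k) (v : Fin k) (_ : u ≠ v), {x : Fin k → I | x u = x v}) = 0 :=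
    measure_iUnion_null fun u => measure_iUnion_null fun v => measure_iUnion_null fun huv =>
      volume_eq_diag_zero u v huv
  have hsub : (⋃ j', Amax (k := k) j')ᶜ ⊆
      ⋃ (u : Fin k) (v : Fin k) (_ : u ≠ v), {x : Fin k → I | x u = x v} := by
    intro x hx
    simp only [Set.mem_compl_iff, Set.mem_iUnion, not_exists] at hx
    obtain ⟨u, hu⟩ := Finite.exists_max x
    have hnot : ¬ x ∈ Amax u := hx u
    rw [Amax, Set.mem_setOf_eq] at hnot
    push_neg at hnot
    obtain ⟨i, hiu, hge⟩ := hnot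
    refine Set.mem_iUnion.mpr ⟨i, Set.mem_iUnion.mpr ⟨u, Set.mem_iUnion.mpr ⟨hiu, ?_⟩⟩⟩
    exact le_antisymm (hu i) hge
  have huniv : volume (Set.univ : Set (Fin k → I)) = 1 := by
    rw [show (Set.univ : Set (Fin k → I)) = Set.pi Set.univ (fun _ => Set.univ) by simp,
      volume_pi_pi]
    simp
  have hfull : volume (⋃ j', Amax (k := k) j') = 1 := by
    refine le_antisymm (by rw [← huniv]; exact measure_mono (Set.subset_univ _)) ?_
    calc (1 : ℝ≥0∞) = volume (Set.univ : Set (Fin k → I)) := huniv.symm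
      _ ≤ volume ((⋃ j', Amax (k := k) j') ∪
            (⋃ (u : Fin k) (v : Fin k) (_ : u ≠ v), {x : Fin k → I | x u = x v})) := by
          refine measure_mono fun x _ => ?_
          by_cases hU : x ∈ ⋃ j', Amax (k := k) j'
          · exact Or.inl hU
          · exact Or.inr (hsub hU)
      _ ≤ volume (⋃ j', Amax (k := k) j') +
            volume (⋃ (u : Fin k) (v : Fin k) (_ : u ≠ v), {x : Fin k → I | x u = x v}) :=
          measure_union_le _ _
      _ = volume (⋃ j', Amax (k := k) j') := by rw [hN, add_zero]
  have hsum : volume (⋃ j', Amax (k := k) j') = ∑ j' : Fin k, volume (Amax j') := by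
    rw [measure_iUnion hdisj (fun j' => measurableSet_Amax j'), tsum_fintype]
  have hkv : (k : ℝ≥0∞) * volume (Amax j) = 1 := by
    rw [← hfull, hsum]
    have : ∀ j' : Fin k, volume (Amax j') = volume (Amax j) := hAe
    simp_rw [this]
    rw [Finset.sum_const, Finset.card_univ, Fintype.card_fin, nsmul_eq_mul]
  have hk0' : (k : ℝ≥0∞) ≠ 0 := by
    simp only [ne_eq, Nat.cast_eq_zero]
    omega
  have := (ENNReal.eq_div_iff hk0' (ENNReal.natCast_ne_top k)).mpr hkv
  rw [this, one_div]


end Stmt5Aux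
/-- lower bound on λ_{p,k}. Here `(k - 1 + p - 1) / p` is `⌈(k-1)/p⌉`. -/
theorem stmt_5 (k p : ℕ) (hk : 2 ≤ k) (hp : 1 ≤ p) :
    (1 - ((((k - 1 + p - 1) / p : ℕ) : ℝ≥0∞) / ((k : ℝ≥0∞) - 1))) * (1 - 1 / (k : ℝ≥0∞)) ≤
      ⨆ (g : (Fin (k - 1) → I) → Fin p) (_ : Measurable g),
        volume {x : Fin k → I |
          g (fun i => x (Fin.castLE (by omega) i)) >
          g (fun i => x ⟨i.1 + 1, by omega⟩)} := by
  classical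
  have hp0 : 0 < p := hp
  set g : (Fin (k - 1) → I) → Fin p :=
    fun y => ⟨Stmt5Aux.maxIdx y % p, Nat.mod_lt _ hp0⟩ with hgdef
  have hg : Measurable g := Stmt5Aux.measurable_g (by omega) hp0
  refine le_trans ?_ (le_iSup₂ g hg)
  set c : ℕ := (k - 1 + p - 1) / p with hcdef
  set a : ℕ := k - 1 - c with hadef
  -- basic cast facts
  have hk0 : (k : ℝ≥0∞) ≠ 0 := by simp only [ne_eq, Nat.cast_eq_zero]; omega
  have hktop : (k : ℝ≥0∞) ≠ ⊤ := ENNReal.natCast_ne_top k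
  have hkm10 : ((k - 1 : ℕ) : ℝ≥0∞) ≠ 0 := by simp only [ne_eq, Nat.cast_eq_zero]; omega
  have hkm1top : ((k - 1 : ℕ) : ℝ≥0∞) ≠ ⊤ := ENNReal.natCast_ne_top _
  have e1 : (k : ℝ≥0∞) - 1 = ((k - 1 : ℕ) : ℝ≥0∞) := by
    rw [ENNReal.natCast_sub, Nat.cast_one]
  -- Step 2 : LHS ≤ a / k
  have step2 : (1 - ((c : ℝ≥0∞) / ((k : ℝ≥0∞) - 1))) * (1 - 1 / (k : ℝ≥0∞))
      ≤ (a : ℝ≥0∞) / (k : ℝ≥0∞) := by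
    have h1 : 1 - (c : ℝ≥0∞) / ((k : ℝ≥0∞) - 1) ≤ (a : ℝ≥0∞) / ((k - 1 : ℕ) : ℝ≥0∞) := by
      rw [e1, tsub_le_iff_right, ENNReal.div_add_div_same]
      rw [show (1 : ℝ≥0∞) = ((k - 1 : ℕ) : ℝ≥0∞) / ((k - 1 : ℕ) : ℝ≥0∞) from
        (ENNReal.div_self hkm10 hkm1top).symm]
      refine ENNReal.div_le_div_right ?_ _
      rw [show ((a : ℝ≥0∞) + (c : ℝ≥0∞)) = ((a + c : ℕ) : ℝ≥0∞) by push_cast; ring]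
      exact Nat.cast_le.mpr (by omega)
    have h2 : 1 - 1 / (k : ℝ≥0∞) ≤ ((k - 1 : ℕ) : ℝ≥0∞) / (k : ℝ≥0∞) := by
      rw [tsub_le_iff_right, ENNReal.div_add_div_same,
        show ((k - 1 : ℕ) : ℝ≥0∞) + 1 = ((k : ℕ) : ℝ≥0∞) by
          rw [← Nat.cast_add_one]; congr 1; omega,
        ENNReal.div_self hk0 hktop]
    calc (1 - ((c : ℝ≥0∞) / ((k : ℝ≥0∞) - 1))) * (1 - 1 / (k : ℝ≥0∞))
        ≤ ((a : ℝ≥0∞) / ((k - 1 : ℕ) : ℝ≥0∞)) * (((k - 1 : ℕ) : ℝ≥0∞) / (k : ℝ≥0∞)) :=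
          mul_le_mul' h1 h2
      _ = (a : ℝ≥0∞) / (k : ℝ≥0∞) := by
          rw [div_eq_mul_inv, div_eq_mul_inv, div_eq_mul_inv]
          calc (a : ℝ≥0∞) * ((k - 1 : ℕ) : ℝ≥0∞)⁻¹ * (((k - 1 : ℕ) : ℝ≥0∞) * ((k : ℝ≥0∞))⁻¹)
              = (a : ℝ≥0∞) * ((k : ℝ≥0∞))⁻¹ * (((k - 1 : ℕ) : ℝ≥0∞)⁻¹ * ((k - 1 : ℕ) : ℝ≥0∞)) := by
                ring
            _ = (a : ℝ≥0∞) * ((k : ℝ≥0∞))⁻¹ := by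
                rw [ENNReal.inv_mul_cancel hkm10 hkm1top, mul_one]
  refine step2.trans ?_
  -- Step 3 : a / k ≤ volume E
  set G : Finset (Fin k) :=
    Finset.univ.filter (fun j : Fin k => 0 < j.1 ∧ j.1 + 1 < k ∧ ¬ p ∣ j.1) with hGdef
  -- counting
  have hGcard : a ≤ G.card := by
    have himg : G.image Fin.val = (Finset.Ioc 0 (k - 2)).filter (fun j => ¬ p ∣ j) := by
      ext m
      simp only [hGdef, Finset.mem_image, Finset.mem_filter, Finset.mem_univ, true_and,
        Finset.mem_Ioc]
      constructor
      · rintro ⟨j, ⟨h1, h2, h3⟩, rfl⟩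
        exact ⟨⟨h1, by omega⟩, h3⟩
      · rintro ⟨⟨h1, h2⟩, h3⟩
        refine ⟨⟨m, by omega⟩, ⟨?_, ?_, ?_⟩, rfl⟩
        · exact h1
        · show m + 1 < k
          omega
        · exact h3
    have hcard : G.card = ((Finset.Ioc 0 (k - 2)).filter (fun j => ¬ p ∣ j)).card := by
      rw [← himg, Finset.card_image_of_injective _ Fin.val_injective]
    have hdvd : ((Finset.Ioc 0 (k - 2)).filter (fun j => p ∣ j)).card = (k - 2) / p :=
      Nat.Ioc_filter_dvd_card_eq_div _ _
    have hsplit := Finset.card_filter_add_card_filter_not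
      (s := Finset.Ioc 0 (k - 2)) (p := fun j => p ∣ j)
    rw [Nat.card_Ioc] at hsplit
    have hql : (k - 2) / p ≤ k - 2 := Nat.div_le_self _ _
    have hkey : c = (k - 2) / p + 1 := by
      rw [hcdef, show k - 1 + p - 1 = (k - 2) + p by omega, Nat.add_div_right _ hp0]
    rw [hcard]
    omega
  -- inclusion
  have hincl : (⋃ j ∈ G, Stmt5Aux.Amax j) ⊆
      {x : Fin k → I |
        g (fun i => x (Fin.castLE (by omega : k - 1 ≤ k) i)) >
        g (fun i : Fin (k - 1) => x ⟨i.1 + 1, by omega⟩)} := by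
    intro x hx
    simp only [Set.mem_iUnion] at hx
    obtain ⟨j, hjG, hxj⟩ := hx
    rw [hGdef, Finset.mem_filter] at hjG
    obtain ⟨-, hj1, hj2, hj3⟩ := hjG
    have hx' : ∀ i : Fin k, i ≠ j → x i < x j := hxj
    -- first window
    have hw1 : Stmt5Aux.maxIdx (fun i : Fin (k - 1) => x (Fin.castLE (by omega : k - 1 ≤ k) i))
        = j.1 := by
      refine Stmt5Aux.maxIdx_eq _ ⟨j.1, by omega⟩ ?_
      intro b hb
      have hcast : Fin.castLE (by omega : k - 1 ≤ k) (⟨j.1, by omega⟩ : Fin (k - 1)) = j :=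
        Fin.ext rfl
      rw [hcast]
      refine hx' _ ?_
      intro hcon
      apply hb
      apply Fin.ext
      have h : b.1 = j.1 := congrArg Fin.val hcon
      exact h
    -- second window
    have hw2 : Stmt5Aux.maxIdx (fun i : Fin (k - 1) => x ⟨i.1 + 1, by omega⟩) = j.1 - 1 := by
      refine Stmt5Aux.maxIdx_eq _ ⟨j.1 - 1, by omega⟩ ?_
      intro b hb
      have hcast : (⟨(j.1 - 1) + 1, by omega⟩ : Fin k) = j := Fin.ext (by simp; omega)
      rw [hcast]
      refine hx' _ ?_
      intro hcon
      apply hb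
      apply Fin.ext
      have h : b.1 + 1 = j.1 := congrArg Fin.val hcon
      show b.1 = j.1 - 1
      omega
    simp only [Set.mem_setOf_eq, gt_iff_lt, hgdef, Fin.lt_def, hw1, hw2]
    exact Stmt5Aux.mod_pred hj1 hj3
  refine le_trans ?_ (measure_mono hincl)
  -- compute the measure of the union
  have hdisjG : (G : Set (Fin k)).PairwiseDisjoint Stmt5Aux.Amax := by
    intro u hu v hv huv
    rw [Function.onFun, Set.disjoint_left]
    intro x hxu hxv
    exact absurd (hxv u huv) (lt_asymm (hxu v huv.symm))
  rw [measure_biUnion_finset hdisjG (fun j _ => Stmt5Aux.measurableSet_Amax j)]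
  have : ∀ j ∈ G, volume (Stmt5Aux.Amax j) = (k : ℝ≥0∞)⁻¹ := fun j _ => Stmt5Aux.volume_Amax j
  rw [Finset.sum_congr rfl this, Finset.sum_const, nsmul_eq_mul]
  rw [div_eq_mul_inv]
  exact mul_le_mul' (Nat.cast_le.mpr hGcard) le_rfl
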